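/- For each i ∈ {0, 1, ..., r} with f'_i ≠ 0, define Φ_i(z) = (1/A)·( f(z)²/f'_i − 2·A·z − Σ_{j=1}^r a_j·(z − z_j)·|z − z_j| ). Then for every z < z_1 and every w > z_r, one has Φ_r(w) − Φ_0(z) = (2/A)·( A² + (Σ_{i=1}^r a_i·z_i)² − Σ_{i=1}^r a_i·z_i² ), where f'_0 = −1 and f'_r = 1. (This is the formula F_r − F_0 = (2/A)·(A² + (Σ a_i z_i)² − Σ a_i z_i²) for the constant boundary values of F on the two unbounded intervals.) -/
import Mathlib


open Finset

/-- The piecewise affine function `f(z) = A + ∑ a_i |z − z_i|`. -/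
noncomputable def fpa {r : ℕ} (A : ℝ) (a zs : Fin r → ℝ) (x : ℝ) : ℝ :=
  A + ∑ i, a i * |x - zs i|

/-- The fSlope `f'_i = −1 + 2 ∑_{j ≤ i} a_j` of `f` on the interval `(z_i, z_{i+1})`
(1-indexed turning points, so the sum is over the first `i` coefficients). -/
def fSlope {r : ℕ} (a : Fin r → ℝ) (i : ℕ) : ℝ :=
  -1 + 2 * ∑ j ∈ Finset.univ.filter (fun j : Fin r => (j : ℕ) < i), a j

/-- The function `Φ_i(x) = (1/A)(f(x)²/f'_i − 2Ax − ∑ a_j (x − z_j)|x − z_j|)`, whose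
constant value on the interval `(z_i, z_{i+1})` is the boundary value `F_i`. -/
noncomputable def Phi {r : ℕ} (A : ℝ) (a zs : Fin r → ℝ) (i : ℕ) (x : ℝ) : ℝ :=
  (1 / A) * (fpa A a zs x ^ 2 / fSlope a i - 2 * A * x -
    ∑ j, a j * (x - zs j) * |x - zs j|)

/-- `F_r − F_0 = (2/A)(A² + (∑ a_i z_i)² − ∑ a_i z_i²)`. -/
theorem statement11 {r : ℕ} (hr : 0 < r) (A : ℝ) (hA : 0 < A)
    (zs a : Fin r → ℝ)
    (hz : ∀ i j : Fin r, i < j → zs i < zs j)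
    (ha : ∀ i, 0 < a i) (hsum : ∑ i, a i = 1)
    (x y : ℝ) (hx : x < zs ⟨0, hr⟩) (hy : zs ⟨r - 1, Nat.sub_lt hr one_pos⟩ < y) :
    Phi A a zs r y - Phi A a zs 0 x =
      (2 / A) * (A ^ 2 + (∑ i, a i * zs i) ^ 2 - ∑ i, a i * zs i ^ 2) := by
  have h1 : ∀ i : Fin r, x < zs i := by
    intro i
    rcases eq_or_ne i ⟨0, hr⟩ with h | h
    · rw [h]; exact hx
    · exact hx.trans (hz _ _ (by
        refine Fin.mk_lt_mk.mpr ?_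
        have : (i : ℕ) ≠ 0 := fun h0 => h (Fin.ext h0)
        omega))
  have h2 : ∀ i : Fin r, zs i < y := by
    intro i
    rcases eq_or_ne i ⟨r - 1, Nat.sub_lt hr one_pos⟩ with h | h
    · rw [h]; exact hy
    · refine (hz i ⟨r - 1, Nat.sub_lt hr one_pos⟩ ?_).trans hy
      have hlt := i.isLt
      have : (i : ℕ) ≠ r - 1 := fun h0 => h (Fin.ext h0)
      exact Fin.mk_lt_mk.mpr (by omega) |>.trans_le le_rfl
  have s0 : fSlope a 0 = -1 := by simp [fSlope]
  have sr : fSlope a r = 1 := by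
    have : Finset.univ.filter (fun j : Fin r => (j : ℕ) < r) = Finset.univ := by
      apply Finset.filter_true_of_mem; intro j _; exact j.isLt
    simp [fSlope, this, hsum]; norm_num
  set S := ∑ i, a i * zs i with hS
  set Q := ∑ i, a i * zs i ^ 2 with hQ
  have e1 : ∑ i, a i * |x - zs i| = S - x := by
    have : ∀ i ∈ Finset.univ, a i * |x - zs i| = a i * zs i - x * a i := by
      intro i _; rw [abs_of_neg (sub_neg.2 (h1 i))]; ring
    rw [Finset.sum_congr rfl this, Finset.sum_sub_distrib, ← Finset.mul_sum, hsum, hS]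
    ring
  have e2 : ∑ i, a i * (x - zs i) * |x - zs i| = -(x ^ 2) + 2 * x * S - Q := by
    have : ∀ i ∈ Finset.univ, a i * (x - zs i) * |x - zs i|
        = -(x ^ 2) * a i + (2 * x) * (a i * zs i) - a i * zs i ^ 2 := by
      intro i _; rw [abs_of_neg (sub_neg.2 (h1 i))]; ring
    rw [Finset.sum_congr rfl this, Finset.sum_sub_distrib, Finset.sum_add_distrib,
      ← Finset.mul_sum, ← Finset.mul_sum, hsum, hS, hQ]
    ring
  have e3 : ∑ i, a i * |y - zs i| = y - S := by
    have : ∀ i ∈ Finset.univ, a i * |y - zs i| = y * a i - a i * zs i := by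
      intro i _; rw [abs_of_pos (sub_pos.2 (h2 i))]; ring
    rw [Finset.sum_congr rfl this, Finset.sum_sub_distrib, ← Finset.mul_sum, hsum, hS]
    ring
  have e4 : ∑ i, a i * (y - zs i) * |y - zs i| = y ^ 2 - 2 * y * S + Q := by
    have : ∀ i ∈ Finset.univ, a i * (y - zs i) * |y - zs i|
        = y ^ 2 * a i - (2 * y) * (a i * zs i) + a i * zs i ^ 2 := by
      intro i _; rw [abs_of_pos (sub_pos.2 (h2 i))]; ring
    rw [Finset.sum_congr rfl this, Finset.sum_add_distrib, Finset.sum_sub_distrib,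
      ← Finset.mul_sum, ← Finset.mul_sum, hsum, hS, hQ]
    ring
  have hA0 : A ≠ 0 := ne_of_gt hA
  rw [Phi, Phi, fpa, fpa, s0, sr, e1, e2, e3, e4, div_neg, div_one, div_one]
  field_simp
  ring
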